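/- arXiv:1706.05462 — 5 statements merged into one kernel-verified Lean document; each statement's English description precedes it below -/
import Mathlib

section
/- Let A be an n×n real matrix, C an r×n real matrix, x₀ ∈ ℝⁿ, c a real number, and T an orthogonal n×n real matrix (Tᵀ T = T Tᵀ = I_n). Let Φ(t) be the r×n matrix whose i-th column is y^{+i}(t) − y^{−i}(t), where y^{±i}(t) = C exp(tA)(x₀ ± c T e_i) are outputs of the linear system ẋ = A x, y = C x from the perturbed initial conditions x₀ ± c T e_i. Then for every t, T Φ(t)ᵀ Φ(t) Tᵀ = 4c² · (exp(tA))ᵀ Cᵀ C exp(tA). -/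
open Matrix

/-- Empirical Gramian integrand for a linear system (Definition 3): for an
orthogonal perturbation matrix `T` and magnitude `c`, with `Φ(t)` the matrix
whose `i`-th column is `y^{+i}(t) − y^{−i}(t)`, where
`y^{±i}(t) = C exp(tA)(x₀ ± c T e_i)`, one has
`T Φ(t)ᵀ Φ(t) Tᵀ = 4c² (exp(tA))ᵀ Cᵀ C exp(tA)`. -/
theorem empirical_gramian_integrand_linear {n r : ℕ}
    (A : Matrix (Fin n) (Fin n) ℝ) (C : Matrix (Fin r) (Fin n) ℝ)
    (x₀ : Fin n → ℝ) (c : ℝ) (T : Matrix (Fin n) (Fin n) ℝ)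
    (hT : Tᵀ * T = 1 ∧ T * Tᵀ = 1)
    (yp ym : Fin n → ℝ → Fin r → ℝ)
    (hyp : ∀ (i : Fin n) (t : ℝ),
      yp i t = (C * NormedSpace.exp (t • A)).mulVec (x₀ + c • T.mulVec (Pi.single i 1)))
    (hym : ∀ (i : Fin n) (t : ℝ),
      ym i t = (C * NormedSpace.exp (t • A)).mulVec (x₀ - c • T.mulVec (Pi.single i 1)))
    (Φ : ℝ → Matrix (Fin r) (Fin n) ℝ)
    (hΦ : ∀ (t : ℝ) (j : Fin r) (i : Fin n), Φ t j i = yp i t j - ym i t j) :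
    ∀ t : ℝ,
      T * (Φ t)ᵀ * Φ t * Tᵀ
        = (4 * c ^ 2) •
            ((NormedSpace.exp (t • A))ᵀ * Cᵀ * C * NormedSpace.exp (t • A)) := by
  intro t
  set M := C * NormedSpace.exp (t • A) with hM
  have hPhi : Φ t = (2 * c) • (M * T) := by
    ext j i
    have h1 := hyp i t
    have h2 := hym i t
    have := hΦ t j i
    rw [this, h1, h2]
    simp only [mulVec_add, mulVec_sub, mulVec_smul, Pi.add_apply, Pi.sub_apply,
      Pi.smul_apply, smul_eq_mul]
    have hcol : (M.mulVec (T.mulVec (Pi.single i 1))) j = (M * T) j i := by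
      rw [← mulVec_mulVec]
      simp [mulVec_single, Matrix.mulVec, dotProduct, Pi.single_apply, hM,
        Matrix.mul_apply, Finset.mul_sum, mul_comm, mul_left_comm]
      rw [Finset.sum_comm]
    rw [hcol]
    simp
    ring
  rw [hPhi]
  rw [transpose_smul, transpose_mul]
  have hTT := hT.2
  have : T * ((2 * c) • (Tᵀ * Mᵀ)) * ((2 * c) • (M * T)) * Tᵀ
      = ((2*c)*(2*c)) • (T * Tᵀ * Mᵀ * M * (T * Tᵀ)) := by
    simp only [Matrix.mul_smul, Matrix.smul_mul, smul_smul]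
    ring_nf
    congr 1
    simp only [Matrix.mul_assoc]
  rw [this, hTT]
  simp only [Matrix.one_mul, Matrix.mul_one]
  rw [hM, transpose_mul]
  ring_nf
  congr 1
  simp only [Matrix.mul_assoc]
end

section
/- Let A be an n×n real matrix, C an r×n real matrix, x₀ ∈ ℝⁿ, τ ∈ ℝ, T₁, …, T_v orthogonal n×n real matrices, and c₁, …, c_s nonzero real numbers. For each l, m, i define y^{±ilm}(t) = C exp(tA)(x₀ ± c_m T_l e_i) (outputs of the linear system ẋ = A x, y = C x from the perturbed initial conditions), and let Φ^{lm}(t) be the r×n matrix whose i-th column is y^{+ilm}(t) − y^{−ilm}(t). Then the empirical observability Gramian X̂₃(τ) = Σ_{l=1}^{v} Σ_{m=1}^{s} (1/(4 v s c_m²)) ∫₀^τ T_l Φ^{lm}(t)ᵀ Φ^{lm}(t) T_lᵀ dt equals the observability Gramian of the linear system, X̂₃(τ) = ∫₀^τ (exp(tA))ᵀ Cᵀ C exp(tA) dt. -/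
open Matrix

/-- The empirical observability Gramian of Definition 3 equals the observability
Gramian of a linear system: with orthogonal perturbation matrices `T l`, nonzero
magnitudes `c m`, and `Φ l m t` the matrix whose `i`-th column is
`y^{+ilm}(t) − y^{−ilm}(t)`, where `y^{±ilm}(t) = C exp(tA)(x₀ ± c_m T_l e_i)`,
`Σ_l Σ_m (1/(4 v s c_m²)) ∫₀^τ T_l Φ^{lm}(t)ᵀ Φ^{lm}(t) T_lᵀ dt
  = ∫₀^τ (exp(tA))ᵀ Cᵀ C exp(tA) dt` (matrix integrals taken entrywise). -/
theorem empirical_gramian_def3_eq_linear_gramian {n r v s : ℕ}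
    (hv : 0 < v) (hs : 0 < s)
    (A : Matrix (Fin n) (Fin n) ℝ) (C : Matrix (Fin r) (Fin n) ℝ)
    (x₀ : Fin n → ℝ) (τ : ℝ)
    (T : Fin v → Matrix (Fin n) (Fin n) ℝ)
    (hT : ∀ l, (T l)ᵀ * T l = 1 ∧ T l * (T l)ᵀ = 1)
    (c : Fin s → ℝ) (hc : ∀ m, c m ≠ 0)
    (Φ : Fin v → Fin s → ℝ → Matrix (Fin r) (Fin n) ℝ)
    (hΦ : ∀ (l : Fin v) (m : Fin s) (t : ℝ) (j : Fin r) (i : Fin n),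
      Φ l m t j i
        = ((C * NormedSpace.exp (t • A)).mulVec
              (x₀ + c m • (T l).mulVec (Pi.single i 1))) j
          - ((C * NormedSpace.exp (t • A)).mulVec
              (x₀ - c m • (T l).mulVec (Pi.single i 1))) j) :
    (∑ l : Fin v, ∑ m : Fin s,
        (1 / (4 * (v : ℝ) * (s : ℝ) * (c m) ^ 2)) •
          Matrix.of (fun i j : Fin n =>
            ∫ t in (0:ℝ)..τ, (T l * (Φ l m t)ᵀ * Φ l m t * (T l)ᵀ) i j))
      = Matrix.of (fun i j : Fin n =>
          ∫ t in (0:ℝ)..τ,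
            ((NormedSpace.exp (t • A))ᵀ * Cᵀ * C * NormedSpace.exp (t • A)) i j) := by
  set E : ℝ → Matrix (Fin n) (Fin n) ℝ := fun t => NormedSpace.exp (t • A) with hE
  set G : ℝ → Matrix (Fin n) (Fin n) ℝ := fun t => (E t)ᵀ * Cᵀ * C * E t with hG
  set R := Matrix.of (fun i j : Fin n => ∫ t in (0:ℝ)..τ, G t i j) with hR
  -- Step 1: Φ l m t = (2 * c m) • (C * E t * T l)
  have hΦ2 : ∀ l m t, Φ l m t = (2 * c m) • (C * E t * T l) := by
    intro l m t
    ext j i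
    rw [hΦ l m t j i]
    have : (C * E t).mulVec (x₀ + c m • (T l).mulVec (Pi.single i 1)) j
        - (C * E t).mulVec (x₀ - c m • (T l).mulVec (Pi.single i 1)) j
        = (2 * c m) * ((C * E t).mulVec ((T l).mulVec (Pi.single i 1))) j := by
      simp [Matrix.mulVec_add, Matrix.mulVec_sub, Matrix.mulVec_smul, Pi.add_apply,
        Pi.sub_apply, Pi.smul_apply, smul_eq_mul]
      ring
    rw [this, Matrix.mulVec_mulVec, Matrix.mulVec_single]
    simp [Matrix.smul_apply, smul_eq_mul, mul_comm]
  -- Step 2: the integrand matrix equals (4 c²) • G t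
  have hkey : ∀ l m t, T l * (Φ l m t)ᵀ * Φ l m t * (T l)ᵀ = (4 * c m ^ 2) • G t := by
    intro l m t
    rw [hΦ2 l m t]
    have h1 : T l * (C * E t * T l)ᵀ * (C * E t * T l) * (T l)ᵀ = G t := by
      have ht2 := (hT l).2
      have e1 : T l * (C * E t * T l)ᵀ = (E t)ᵀ * Cᵀ := by
        simp only [Matrix.transpose_mul]
        rw [← Matrix.mul_assoc, ht2, Matrix.one_mul]
      have e2 : (C * E t * T l) * (T l)ᵀ = C * E t := by
        rw [Matrix.mul_assoc, ht2, Matrix.mul_one]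
      rw [Matrix.mul_assoc (T l * (C * E t * T l)ᵀ), e1, e2]
      simp only [hG]
      rw [← Matrix.mul_assoc]
    simp only [Matrix.transpose_smul, Matrix.smul_mul, Matrix.mul_smul, smul_smul, h1]
    congr 1
    ring
  -- Step 3: each summand equals ((v*s : ℝ))⁻¹ • R
  have hterm : ∀ l m,
      (1 / (4 * (v : ℝ) * (s : ℝ) * (c m) ^ 2)) •
        Matrix.of (fun i j : Fin n =>
          ∫ t in (0:ℝ)..τ, (T l * (Φ l m t)ᵀ * Φ l m t * (T l)ᵀ) i j)
      = ((v : ℝ) * (s : ℝ))⁻¹ • R := by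
    intro l m
    have : (Matrix.of (fun i j : Fin n =>
        ∫ t in (0:ℝ)..τ, (T l * (Φ l m t)ᵀ * Φ l m t * (T l)ᵀ) i j))
        = (4 * c m ^ 2) • R := by
      ext i j
      simp only [Matrix.of_apply, hkey, Matrix.smul_apply, smul_eq_mul, hR]
      rw [intervalIntegral.integral_const_mul]
    rw [this, smul_smul]
    congr 1
    have hv' : (v : ℝ) ≠ 0 := Nat.cast_ne_zero.mpr hv.ne'
    have hs' : (s : ℝ) ≠ 0 := Nat.cast_ne_zero.mpr hs.ne'
    have hc' : c m ≠ 0 := hc m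
    field_simp
  -- Step 4: sum up
  calc (∑ l : Fin v, ∑ m : Fin s,
        (1 / (4 * (v : ℝ) * (s : ℝ) * (c m) ^ 2)) •
          Matrix.of (fun i j : Fin n =>
            ∫ t in (0:ℝ)..τ, (T l * (Φ l m t)ᵀ * Φ l m t * (T l)ᵀ) i j))
      = ∑ l : Fin v, ∑ m : Fin s, ((v : ℝ) * (s : ℝ))⁻¹ • R := by
        refine Finset.sum_congr rfl fun l _ => Finset.sum_congr rfl fun m _ => hterm l m
    _ = R := by
        have hv' : (v : ℝ) ≠ 0 := Nat.cast_ne_zero.mpr hv.ne'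
        have hs' : (s : ℝ) ≠ 0 := Nat.cast_ne_zero.mpr hs.ne'
        simp only [Finset.sum_const, Finset.card_univ, Fintype.card_fin, Nat.cast_smul_eq_nsmul ℝ,
          smul_smul]
        rw [← Nat.cast_smul_eq_nsmul ℝ, Nat.cast_mul, smul_smul,
          mul_inv_cancel₀ (by positivity), one_smul]
end

section
/- Let A be an n×n real matrix, C an r×n real matrix, x₀ ∈ ℝⁿ, τ ∈ ℝ, and γ a nonzero real number. For each i ∈ {1, …, n} define y^{±i}(t) = C exp(tA)(x₀ ± γ e_i) (outputs of the linear system ẋ = A x, y = C x from the perturbed initial conditions x₀ ± γ e_i), and let Φ^γ(t) be the r×n matrix whose i-th column is y^{+i}(t) − y^{−i}(t). Then the empirical observability Gramian X̂₂(τ) = (1/(4γ²)) ∫₀^τ Φ^γ(t)ᵀ Φ^γ(t) dt equals the observability Gramian of the linear system, X̂₂(τ) = ∫₀^τ (exp(tA))ᵀ Cᵀ C exp(tA) dt. -/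
open Matrix

/-- The empirical observability Gramian of Definition 2 equals the observability
Gramian of a linear system: with `Φ^γ(t)` the matrix whose `i`-th column is
`y^{+i}(t) − y^{−i}(t)`, where `y^{±i}(t) = C exp(tA)(x₀ ± γ e_i)`,
`(1/(4γ²)) ∫₀^τ Φ^γ(t)ᵀ Φ^γ(t) dt = ∫₀^τ (exp(tA))ᵀ Cᵀ C exp(tA) dt`
(matrix integrals taken entrywise). -/
theorem empirical_gramian_def2_eq_linear_gramian {n r : ℕ}
    (A : Matrix (Fin n) (Fin n) ℝ) (C : Matrix (Fin r) (Fin n) ℝ)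
    (x₀ : Fin n → ℝ) (τ : ℝ) (γ : ℝ) (hγ : γ ≠ 0)
    (Φ : ℝ → Matrix (Fin r) (Fin n) ℝ)
    (hΦ : ∀ (t : ℝ) (j : Fin r) (i : Fin n),
      Φ t j i
        = ((C * NormedSpace.exp (t • A)).mulVec (x₀ + γ • (Pi.single i 1 : Fin n → ℝ))) j
          - ((C * NormedSpace.exp (t • A)).mulVec (x₀ - γ • (Pi.single i 1 : Fin n → ℝ))) j) :
    (1 / (4 * γ ^ 2)) •
        Matrix.of (fun i j : Fin n => ∫ t in (0:ℝ)..τ, ((Φ t)ᵀ * Φ t) i j)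
      = Matrix.of (fun i j : Fin n =>
          ∫ t in (0:ℝ)..τ,
            ((NormedSpace.exp (t • A))ᵀ * Cᵀ * C * NormedSpace.exp (t • A)) i j) := by
  have hΦ' : ∀ t, Φ t = (2 * γ) • (C * NormedSpace.exp (t • A)) := by
    intro t
    ext j i
    rw [hΦ]
    simp [Matrix.mulVec_add, Matrix.mulVec_sub, Matrix.mulVec_smul, Matrix.mulVec_single]
    ring
  ext i j
  have key : ∀ t : ℝ, ((Φ t)ᵀ * Φ t) i j
      = (4 * γ ^ 2) *
        (((NormedSpace.exp (t • A))ᵀ * Cᵀ * C * NormedSpace.exp (t • A)) i j) := by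
    intro t
    rw [hΦ']
    simp [Matrix.transpose_smul, Matrix.smul_mul, Matrix.mul_smul, Matrix.transpose_mul,
      Matrix.mul_assoc, smul_smul]
    ring
  simp only [Matrix.smul_apply, Matrix.of_apply, key, smul_eq_mul]
  rw [intervalIntegral.integral_const_mul]
  field_simp
end

section
/- Let A be an n×n real matrix, C an r×n real matrix, c a nonzero real number, and T an orthogonal n×n real matrix (Tᵀ T = T Tᵀ = I_n). For each i ∈ {1, …, n}, let y^i(t) = C exp(tA)(c T e_i) be the output of the linear system ẋ = A x, y = C x from the initial condition c T e_i, and define the n×n matrix Ψ(t) with entries Ψ_{ij}(t) = y^i(t)ᵀ y^j(t). Then for every t, T Ψ(t) Tᵀ = c² · (exp(tA))ᵀ Cᵀ C exp(tA). -/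
open Matrix

/-- Empirical Gramian integrand of Definition 1 for a linear system: with
`y^i(t) = C exp(tA)(c T e_i)` for an orthogonal matrix `T` and nonzero `c`, and
`Ψ(t)` the matrix with entries `Ψ_{ij}(t) = y^i(t)ᵀ y^j(t)`, one has
`T Ψ(t) Tᵀ = c² (exp(tA))ᵀ Cᵀ C exp(tA)`. -/
theorem empirical_gramian_def1_integrand_linear {n r : ℕ}
    (A : Matrix (Fin n) (Fin n) ℝ) (C : Matrix (Fin r) (Fin n) ℝ)
    (c : ℝ) (hc : c ≠ 0) (T : Matrix (Fin n) (Fin n) ℝ)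
    (hT : Tᵀ * T = 1 ∧ T * Tᵀ = 1)
    (y : Fin n → ℝ → Fin r → ℝ)
    (hy : ∀ (i : Fin n) (t : ℝ),
      y i t = (C * NormedSpace.exp (t • A)).mulVec (c • T.mulVec (Pi.single i 1)))
    (Ψ : ℝ → Matrix (Fin n) (Fin n) ℝ)
    (hΨ : ∀ (t : ℝ) (i j : Fin n), Ψ t i j = y i t ⬝ᵥ y j t) :
    ∀ t : ℝ,
      T * Ψ t * Tᵀ
        = c ^ 2 • ((NormedSpace.exp (t • A))ᵀ * Cᵀ * C * NormedSpace.exp (t • A)) := by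
  intro t
  set M := C * NormedSpace.exp (t • A) with hM
  have hyi : ∀ i : Fin n, y i t = c • ((M * T)ᵀ i) := by
    intro i
    rw [hy, Matrix.mulVec_smul, Matrix.mulVec_mulVec, Matrix.mulVec_single_one]
    rfl
  have hΨ' : Ψ t = c ^ 2 • ((M * T)ᵀ * (M * T)) := by
    ext i j
    rw [hΨ, hyi, hyi, smul_dotProduct, dotProduct_smul, Matrix.smul_apply, Matrix.mul_apply']
    show c * (c * _) = c ^ 2 * _
    ring_nf
    rfl
  rw [hΨ', Matrix.mul_smul, Matrix.smul_mul]
  congr 1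
  rw [Matrix.transpose_mul, hM, Matrix.transpose_mul]
  simp only [Matrix.mul_assoc]
  rw [hT.2, Matrix.mul_one, ← Matrix.mul_assoc, hT.2, Matrix.one_mul]
end

section
/- Let A be an n×n real matrix, C an r×n real matrix, τ ∈ ℝ, T₁, …, T_v orthogonal n×n real matrices, and c₁, …, c_s nonzero real numbers. For each l, m, i, let y^{ilm}(t) = C exp(tA)(c_m T_l e_i) be the output of the linear system ẋ = A x, y = C x from the initial condition c_m T_l e_i, and define the n×n matrices Ψ^{lm}(t) with entries Ψ^{lm}_{ij}(t) = y^{ilm}(t)ᵀ y^{jlm}(t). Then Σ_{l=1}^{v} Σ_{m=1}^{s} (1/(v s c_m²)) ∫₀^τ T_l Ψ^{lm}(t) T_lᵀ dt = ∫₀^τ (exp(tA))ᵀ Cᵀ C exp(tA) dt; that is, the empirical observability Gramian of Definition 1 (with vanishing output time-averages and finite horizon τ) equals the observability Gramian of the linear system. -/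
open Matrix

lemma psi_eq {n r : ℕ} (B Tl : Matrix (Fin n) (Fin n) ℝ) (Cm : Matrix (Fin r) (Fin n) ℝ)
    (cm : ℝ) (i j : Fin n) :
    ((Cm * B).mulVec (cm • Tl.mulVec (Pi.single i 1)))
      ⬝ᵥ ((Cm * B).mulVec (cm • Tl.mulVec (Pi.single j 1)))
    = cm ^ 2 * ((Tlᵀ * (Bᵀ * Cmᵀ * Cm * B) * Tl) i j) := by
  rw [mulVec_smul, mulVec_smul, smul_dotProduct, dotProduct_smul, mulVec_mulVec, mulVec_mulVec,
    mulVec_single, mulVec_single]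
  simp only [mul_one, smul_eq_mul, MulOpposite.op_one, one_smul]
  have : ∀ i j : Fin n,
      (fun k => (Cm * B * Tl) k i) ⬝ᵥ (fun k => (Cm * B * Tl) k j)
        = ((Cm * B * Tl)ᵀ * (Cm * B * Tl)) i j := by
    intro i j; simp [Matrix.mul_apply, dotProduct, transpose_apply, mul_comm]
  rw [show (Cm * B * Tl).col i ⬝ᵥ (Cm * B * Tl).col j = _ from this i j]
  have h2 : (Cm * B * Tl)ᵀ * (Cm * B * Tl) = Tlᵀ * (Bᵀ * Cmᵀ * Cm * B) * Tl := by
    simp only [transpose_mul, Matrix.mul_assoc]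
  rw [h2]; ring


/-- The empirical observability Gramian of Definition 1 (with vanishing output
time-averages and finite horizon `τ`) equals the observability Gramian of a
linear system: with `y^{ilm}(t) = C exp(tA)(c_m T_l e_i)` for orthogonal `T l`
and nonzero `c m`, and `Ψ^{lm}(t)` the matrix with entries
`Ψ^{lm}_{ij}(t) = y^{ilm}(t)ᵀ y^{jlm}(t)`,
`Σ_l Σ_m (1/(v s c_m²)) ∫₀^τ T_l Ψ^{lm}(t) T_lᵀ dt
  = ∫₀^τ (exp(tA))ᵀ Cᵀ C exp(tA) dt` (matrix integrals taken entrywise). -/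
theorem empirical_gramian_def1_eq_linear_gramian {n r v s : ℕ}
    (hv : 0 < v) (hs : 0 < s)
    (A : Matrix (Fin n) (Fin n) ℝ) (C : Matrix (Fin r) (Fin n) ℝ) (τ : ℝ)
    (T : Fin v → Matrix (Fin n) (Fin n) ℝ)
    (hT : ∀ l, (T l)ᵀ * T l = 1 ∧ T l * (T l)ᵀ = 1)
    (c : Fin s → ℝ) (hc : ∀ m, c m ≠ 0)
    (Ψ : Fin v → Fin s → ℝ → Matrix (Fin n) (Fin n) ℝ)
    (hΨ : ∀ (l : Fin v) (m : Fin s) (t : ℝ) (i j : Fin n),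
      Ψ l m t i j
        = ((C * NormedSpace.exp (t • A)).mulVec (c m • (T l).mulVec (Pi.single i 1)))
            ⬝ᵥ ((C * NormedSpace.exp (t • A)).mulVec (c m • (T l).mulVec (Pi.single j 1)))) :
    (∑ l : Fin v, ∑ m : Fin s,
        (1 / ((v : ℝ) * (s : ℝ) * (c m) ^ 2)) •
          Matrix.of (fun i j : Fin n =>
            ∫ t in (0:ℝ)..τ, (T l * Ψ l m t * (T l)ᵀ) i j))
      = Matrix.of (fun i j : Fin n =>
          ∫ t in (0:ℝ)..τ,
            ((NormedSpace.exp (t • A))ᵀ * Cᵀ * C * NormedSpace.exp (t • A)) i j) := by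
  set M : ℝ → Matrix (Fin n) (Fin n) ℝ := fun t =>
    (NormedSpace.exp (t • A))ᵀ * Cᵀ * C * NormedSpace.exp (t • A) with hM
  set G : Matrix (Fin n) (Fin n) ℝ :=
    Matrix.of (fun i j : Fin n => ∫ t in (0:ℝ)..τ, M t i j) with hG
  have key : ∀ (l : Fin v) (m : Fin s) (t : ℝ),
      T l * Ψ l m t * (T l)ᵀ = (c m) ^ 2 • M t := by
    intro l m t
    have hΨeq : Ψ l m t = (c m) ^ 2 • ((T l)ᵀ * M t * T l) := by
      ext i j
      rw [hΨ, psi_eq]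
      simp [hM, Matrix.mul_assoc]
    rw [hΨeq]
    rw [Matrix.mul_smul, Matrix.smul_mul]
    congr 1
    calc T l * ((T l)ᵀ * M t * T l) * (T l)ᵀ
        = (T l * (T l)ᵀ) * M t * (T l * (T l)ᵀ) := by
          simp only [Matrix.mul_assoc]
      _ = M t := by rw [(hT l).2]; simp
  have hterm : ∀ (l : Fin v) (m : Fin s),
      (1 / ((v : ℝ) * (s : ℝ) * (c m) ^ 2)) •
        Matrix.of (fun i j : Fin n => ∫ t in (0:ℝ)..τ, (T l * Ψ l m t * (T l)ᵀ) i j)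
      = (1 / ((v : ℝ) * (s : ℝ))) • G := by
    intro l m
    have : Matrix.of (fun i j : Fin n => ∫ t in (0:ℝ)..τ, (T l * Ψ l m t * (T l)ᵀ) i j)
        = (c m) ^ 2 • G := by
      ext i j
      simp only [key, Matrix.of_apply, Matrix.smul_apply, smul_eq_mul, hG]
      rw [← intervalIntegral.integral_const_mul]
    rw [this, smul_smul]
    congr 1
    have h2 : (c m) ^ 2 ≠ 0 := pow_ne_zero 2 (hc m)
    have hv' : (v : ℝ) ≠ 0 := Nat.cast_ne_zero.mpr hv.ne'
    have hs' : (s : ℝ) ≠ 0 := Nat.cast_ne_zero.mpr hs.ne'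
    field_simp
    exact mul_inv_cancel₀ (hc m)
  simp only [hterm]
  rw [Finset.sum_const, Finset.sum_const]
  simp only [Finset.card_univ, Fintype.card_fin, smul_smul, ← hG]
  have hv' : (v : ℝ) ≠ 0 := Nat.cast_ne_zero.mpr hv.ne'
  have hs' : (s : ℝ) ≠ 0 := Nat.cast_ne_zero.mpr hs.ne'
  rw [← Nat.cast_smul_eq_nsmul ℝ, smul_smul]
  rw [show ((v * s : ℕ) : ℝ) * (1 / ((v:ℝ) * (s:ℝ))) = 1 by push_cast; field_simp]
  rw [one_smul]
end
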